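/- Assume α₁, α₂, α₃ > 0. Let x : [0,∞) → ℝ³ be differentiable with x'(t) = b(x(t)) for all t ≥ 0, x(0) ∈ ℝ³₊ ∖ {0} where ℝ³₊ = {x : x₁ ≥ 0, x₂ ≥ 0, x₃ ≥ 0}. Then the ω-limit set of the solution — the set of all p ∈ ℝ³ for which there is a sequence tₙ → ∞ with x(tₙ) → p — is contained in S²₊ = {x ∈ ℝ³₊ : x₁²+x₂²+x₃² = 1}. -/

import Mathlib

/-!
Each coordinate solves a scalar linear equation `xᵢ' = fᵢ(x(t)) xᵢ`, so
`xᵢ(t) = xᵢ(0) exp ∫ fᵢ` keeps its sign. The field satisfies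
`⟪x, b(x)⟫ = (α₁x₁² + α₂x₂² + α₃x₃²)(1 - ‖x‖²)`, so `v = 1 - ‖x‖²` solves `v' = -c(t) v` with
`c ≥ 0`: `‖x(t)‖²` stays between `‖x(0)‖²` and `1`, hence `c ≥ 2 min αᵢ · min(‖x(0)‖², 1) > 0`
and `v` decays exponentially.
-/

open scoped RealInnerProductSpace

/-- The cubic Kolmogorov vector field on `ℝ³` (modelled as `EuclideanSpace ℝ (Fin 3)`):
`b(x)₁ = x₁(α₁ − α₁x₁² − (α₁+α₂+d₁)x₂² + d₂x₃²)`,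
`b(x)₂ = x₂(α₂ + d₁x₁² − α₂x₂² − (α₂+α₃+d₃)x₃²)`,
`b(x)₃ = x₃(α₃ − (α₃+α₁+d₂)x₁² + d₃x₂² − α₃x₃²)`. -/
noncomputable def bVF (α₁ α₂ α₃ d₁ d₂ d₃ : ℝ) (x : EuclideanSpace ℝ (Fin 3)) :
    EuclideanSpace ℝ (Fin 3) :=
  (WithLp.equiv 2 (Fin 3 → ℝ)).symm
    ![x 0 * (α₁ - α₁ * (x 0)^2 - (α₁ + α₂ + d₁) * (x 1)^2 + d₂ * (x 2)^2),
      x 1 * (α₂ + d₁ * (x 0)^2 - α₂ * (x 1)^2 - (α₂ + α₃ + d₃) * (x 2)^2),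
      x 2 * (α₃ - (α₃ + α₁ + d₂) * (x 0)^2 + d₃ * (x 1)^2 - α₃ * (x 2)^2)]

open Real Set Filter Topology

theorem eq_mul_exp_integral_of_hasDerivAt {y g : ℝ → ℝ} (hg : ContinuousOn g (Ici 0))
    (hy : ∀ t, 0 ≤ t → HasDerivAt y (g t * y t) t) {T : ℝ} (hT : 0 ≤ T) :
    y T = y 0 * exp (∫ s in (0 : ℝ)..T, g s) := by
  set G : ℝ → ℝ := fun t => ∫ s in (0 : ℝ)..t, g s
  have hgT : ContinuousOn g (uIcc 0 T) := hg.mono (by simp [uIcc_of_le hT, Icc_subset_Ici_self])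
  have hG : ∀ t ∈ Ico 0 T, HasDerivWithinAt G (g t) (Ici t) t := fun t ht =>
    intervalIntegral.integral_hasDerivWithinAt_right
      (hg.mono (by simp [uIcc_of_le ht.1, Icc_subset_Ici_self])).intervalIntegrable
      ((hg.mono fun s (hs : t < s) => ht.1.trans hs.le).stronglyMeasurableAtFilter_nhdsWithin
        measurableSet_Ioi t)
      ((hg t ht.1).mono fun s (hs : t < s) => ht.1.trans hs.le)
  have hGcont : ContinuousOn G (Icc 0 T) := by
    simpa [uIcc_of_le hT] using
      intervalIntegral.continuousOn_primitive_interval (hgT.integrableOn_compact isCompact_uIcc)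
  -- integrating factor: `y t * exp (-G t)` is constant on `[0, T]`
  have hconst := constant_of_has_deriv_right_zero (f := fun t => y t * exp (-G t))
    ((continuousOn_of_forall_continuousAt fun t ht => (hy t ht.1).continuousAt).mul
      (hGcont.neg.rexp))
    (fun t ht => (((hy t ht.1).hasDerivWithinAt).mul (hG t ht).neg.exp).congr_deriv (by ring))
    T (right_mem_Icc.2 hT)
  simp only [G, intervalIntegral.integral_same, neg_zero, exp_zero, mul_one, exp_neg] at hconst
  exact (mul_inv_eq_iff_eq_mul₀ (exp_pos _).ne').1 hconst

theorem intervalIntegral_le_mul_of_le {g : ℝ → ℝ} {c T : ℝ} (hT : 0 ≤ T)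
    (hg : IntervalIntegrable g MeasureTheory.volume 0 T) (hle : ∀ s ∈ Icc 0 T, g s ≤ c) :
    ∫ s in (0 : ℝ)..T, g s ≤ c * T := by
  simpa [mul_comm] using intervalIntegral.integral_mono_on hT hg intervalIntegrable_const hle

theorem mem_uIcc_zero_of_hasDerivAt_mul {y g : ℝ → ℝ} (hg : ContinuousOn g (Ici 0))
    (hg_nonpos : ∀ t, 0 ≤ t → g t ≤ 0) (hy : ∀ t, 0 ≤ t → HasDerivAt y (g t * y t) t)
    {T : ℝ} (hT : 0 ≤ T) : y T ∈ uIcc 0 (y 0) := by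
  have hI : ∫ s in (0 : ℝ)..T, g s ≤ 0 := by
    simpa using intervalIntegral_le_mul_of_le hT
      (hg.mono (by simp [uIcc_of_le hT, Icc_subset_Ici_self])).intervalIntegrable
      fun s hs => hg_nonpos s hs.1
  have hE : exp (∫ s in (0 : ℝ)..T, g s) ≤ 1 := exp_le_one_iff.2 hI
  have hE₀ := exp_pos (∫ s in (0 : ℝ)..T, g s)
  rw [eq_mul_exp_integral_of_hasDerivAt hg hy hT, mem_uIcc]
  rcases le_total 0 (y 0) with h | h
  · exact Or.inl ⟨by positivity, mul_le_of_le_one_right h hE⟩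
  · exact Or.inr ⟨le_mul_of_le_one_right h hE, mul_nonpos_of_nonpos_of_nonneg h hE₀.le⟩

theorem abs_le_mul_exp_of_hasDerivAt_mul {y g : ℝ → ℝ} {κ : ℝ} (hg : ContinuousOn g (Ici 0))
    (hg_le : ∀ t, 0 ≤ t → g t ≤ -κ) (hy : ∀ t, 0 ≤ t → HasDerivAt y (g t * y t) t)
    {T : ℝ} (hT : 0 ≤ T) : |y T| ≤ |y 0| * exp (-κ * T) := by
  have hI : ∫ s in (0 : ℝ)..T, g s ≤ -κ * T :=
    intervalIntegral_le_mul_of_le hT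
      (hg.mono (by simp [uIcc_of_le hT, Icc_subset_Ici_self])).intervalIntegrable
      fun s hs => hg_le s hs.1
  rw [eq_mul_exp_integral_of_hasDerivAt hg hy hT, abs_mul, abs_of_pos (exp_pos _)]
  gcongr

theorem coord_nonneg_of_hasDerivAt_mul_coord {ι : Type*} [Fintype ι]
    {b : EuclideanSpace ℝ ι → EuclideanSpace ℝ ι} {f : EuclideanSpace ℝ ι → ι → ℝ}
    {i : ι} (hf : Continuous fun v => f v i) (hb : ∀ v, b v i = v i * f v i)
    {x : ℝ → EuclideanSpace ℝ ι} (hx : ∀ t, 0 ≤ t → HasDerivAt x (b (x t)) t)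
    (h₀ : 0 ≤ x 0 i) {t : ℝ} (ht : 0 ≤ t) : 0 ≤ x t i := by
  have hxi : ∀ s, 0 ≤ s → HasDerivAt (fun s => x s i) (f (x s) i * x s i) s := fun s hs => by
    rw [mul_comm, ← hb]
    exact (EuclideanSpace.proj (𝕜 := ℝ) i).hasFDerivAt.comp_hasDerivAt s (hx s hs)
  have hfx : ContinuousOn (fun s => f (x s) i) (Ici 0) :=
    hf.comp_continuousOn fun s hs => (hx s hs).continuousAt.continuousWithinAt
  rw [eq_mul_exp_integral_of_hasDerivAt hfx hxi ht]
  positivity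

section Kolmogorov

variable {α₁ α₂ α₃ d₁ d₂ d₃ : ℝ}

def bVFRate (α₁ α₂ α₃ d₁ d₂ d₃ : ℝ) (v : EuclideanSpace ℝ (Fin 3)) : Fin 3 → ℝ :=
  ![α₁ - α₁ * (v 0)^2 - (α₁ + α₂ + d₁) * (v 1)^2 + d₂ * (v 2)^2,
    α₂ + d₁ * (v 0)^2 - α₂ * (v 1)^2 - (α₂ + α₃ + d₃) * (v 2)^2,
    α₃ - (α₃ + α₁ + d₂) * (v 0)^2 + d₃ * (v 1)^2 - α₃ * (v 2)^2]

theorem bVF_apply (v : EuclideanSpace ℝ (Fin 3)) (i : Fin 3) :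
    bVF α₁ α₂ α₃ d₁ d₂ d₃ v i = v i * bVFRate α₁ α₂ α₃ d₁ d₂ d₃ v i := by
  fin_cases i <;> simp [bVF, bVFRate]

theorem continuous_bVFRate (i : Fin 3) :
    Continuous fun v => bVFRate α₁ α₂ α₃ d₁ d₂ d₃ v i := by
  fin_cases i <;> simp only [bVFRate] <;> fun_prop

def weightedNormSq (α₁ α₂ α₃ : ℝ) (v : EuclideanSpace ℝ (Fin 3)) : ℝ :=
  α₁ * v 0 ^ 2 + α₂ * v 1 ^ 2 + α₃ * v 2 ^ 2

theorem continuous_weightedNormSq : Continuous (weightedNormSq α₁ α₂ α₃) := by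
  unfold weightedNormSq; fun_prop

theorem min_mul_norm_sq_le_weightedNormSq (v : EuclideanSpace ℝ (Fin 3)) :
    min α₁ (min α₂ α₃) * ‖v‖ ^ 2 ≤ weightedNormSq α₁ α₂ α₃ v := by
  have h₁ : min α₁ (min α₂ α₃) ≤ α₁ := min_le_left _ _
  have h₂ : min α₁ (min α₂ α₃) ≤ α₂ := (min_le_right _ _).trans (min_le_left _ _)
  have h₃ : min α₁ (min α₂ α₃) ≤ α₃ := (min_le_right _ _).trans (min_le_right _ _)
  rw [EuclideanSpace.real_norm_sq_eq, Fin.sum_univ_three, weightedNormSq]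
  nlinarith [mul_le_mul_of_nonneg_right h₁ (sq_nonneg (v 0)),
    mul_le_mul_of_nonneg_right h₂ (sq_nonneg (v 1)), mul_le_mul_of_nonneg_right h₃ (sq_nonneg (v 2))]

theorem inner_bVF_self (v : EuclideanSpace ℝ (Fin 3)) :
    ⟪v, bVF α₁ α₂ α₃ d₁ d₂ d₃ v⟫ = weightedNormSq α₁ α₂ α₃ v * (1 - ‖v‖ ^ 2) := by
  simp only [PiLp.inner_apply, Fin.sum_univ_three, EuclideanSpace.real_norm_sq_eq, bVF_apply,
    bVFRate, weightedNormSq, Matrix.cons_val_zero, RCLike.inner_apply, ringHom_apply,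
    Matrix.cons_val_one, Matrix.cons_val]
  ring

variable {x : ℝ → EuclideanSpace ℝ (Fin 3)}

theorem hasDerivAt_one_sub_norm_sq_of_bVF
    (hx : ∀ t, 0 ≤ t → HasDerivAt x (bVF α₁ α₂ α₃ d₁ d₂ d₃ (x t)) t) {t : ℝ} (ht : 0 ≤ t) :
    HasDerivAt (fun s => 1 - ‖x s‖ ^ 2)
      (-(2 * weightedNormSq α₁ α₂ α₃ (x t)) * (1 - ‖x t‖ ^ 2)) t := by
  refine (((hx t ht).norm_sq).const_sub 1).congr_deriv ?_
  rw [inner_bVF_self]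
  ring

theorem min_le_norm_sq_of_bVF (hα₁ : 0 ≤ α₁) (hα₂ : 0 ≤ α₂) (hα₃ : 0 ≤ α₃)
    (hx : ∀ t, 0 ≤ t → HasDerivAt x (bVF α₁ α₂ α₃ d₁ d₂ d₃ (x t)) t) {t : ℝ} (ht : 0 ≤ t) :
    min (‖x 0‖ ^ 2) 1 ≤ ‖x t‖ ^ 2 := by
  have hxc : ContinuousOn x (Ici 0) := fun s hs => (hx s hs).continuousAt.continuousWithinAt
  have hg : ContinuousOn (fun s => -(2 * weightedNormSq α₁ α₂ α₃ (x s))) (Ici 0) :=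
    (continuousOn_const.mul (continuous_weightedNormSq.comp_continuousOn hxc)).neg
  have hmem := mem_uIcc_zero_of_hasDerivAt_mul hg
    (fun s _ => by
      have : 0 ≤ weightedNormSq α₁ α₂ α₃ (x s) := by unfold weightedNormSq; positivity
      linarith)
    (fun s hs => hasDerivAt_one_sub_norm_sq_of_bVF hx hs) ht
  rcases mem_uIcc.1 hmem with h | h
  · exact (min_le_left _ _).trans (by linarith [h.2])
  · exact (min_le_right _ _).trans (by linarith [h.2])

theorem abs_one_sub_norm_sq_le_of_bVF (hα₁ : 0 ≤ α₁) (hα₂ : 0 ≤ α₂) (hα₃ : 0 ≤ α₃)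
    (hx : ∀ t, 0 ≤ t → HasDerivAt x (bVF α₁ α₂ α₃ d₁ d₂ d₃ (x t)) t) {t : ℝ} (ht : 0 ≤ t) :
    |1 - ‖x t‖ ^ 2| ≤
      |1 - ‖x 0‖ ^ 2| * exp (-(2 * (min α₁ (min α₂ α₃) * min (‖x 0‖ ^ 2) 1)) * t) := by
  have hxc : ContinuousOn x (Ici 0) := fun s hs => (hx s hs).continuousAt.continuousWithinAt
  have hg : ContinuousOn (fun s => -(2 * weightedNormSq α₁ α₂ α₃ (x s))) (Ici 0) :=
    (continuousOn_const.mul (continuous_weightedNormSq.comp_continuousOn hxc)).neg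
  refine abs_le_mul_exp_of_hasDerivAt_mul hg (fun s hs => ?_)
    (fun s hs => hasDerivAt_one_sub_norm_sq_of_bVF hx hs) ht
  have hm : 0 ≤ min α₁ (min α₂ α₃) := le_min hα₁ (le_min hα₂ hα₃)
  have := (mul_le_mul_of_nonneg_left (min_le_norm_sq_of_bVF hα₁ hα₂ hα₃ hx hs) hm).trans
    (min_mul_norm_sq_le_weightedNormSq (x s))
  linarith

theorem tendsto_norm_sq_of_bVF (hα₁ : 0 < α₁) (hα₂ : 0 < α₂) (hα₃ : 0 < α₃)
    (hx : ∀ t, 0 ≤ t → HasDerivAt x (bVF α₁ α₂ α₃ d₁ d₂ d₃ (x t)) t) (h₀ : x 0 ≠ 0) :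
    Tendsto (fun t => ‖x t‖ ^ 2) atTop (𝓝 1) := by
  set κ := 2 * (min α₁ (min α₂ α₃) * min (‖x 0‖ ^ 2) 1)
  have hκ : 0 < κ := by
    have := norm_pos_iff.2 h₀
    have := lt_min hα₁ (lt_min hα₂ hα₃)
    positivity
  have hdecay : Tendsto (fun t => |1 - ‖x 0‖ ^ 2| * exp (-κ * t)) atTop (𝓝 0) := by
    simpa using (tendsto_exp_neg_atTop_nhds_zero.comp (tendsto_id.const_mul_atTop hκ)).const_mul
      |1 - ‖x 0‖ ^ 2|
  have hsub : Tendsto (fun t => 1 - ‖x t‖ ^ 2) atTop (𝓝 0) :=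
    squeeze_zero_norm' ((eventually_ge_atTop 0).mono fun t ht =>
      abs_one_sub_norm_sq_le_of_bVF hα₁.le hα₂.le hα₃.le hx ht) hdecay
  simpa using (tendsto_const_nhds (x := (1 : ℝ))).sub hsub

end Kolmogorov

/-- If `αᵢ > 0` and `x(0) ∈ ℝ³₊ \\ {0}`, the ω-limit set of the solution is contained
in `S²₊ = {p ∈ ℝ³₊ : p₁²+p₂²+p₃² = 1}`. -/
theorem omega_limit_in_sphere_octant (α₁ α₂ α₃ d₁ d₂ d₃ : ℝ)
    (hα₁ : 0 < α₁) (hα₂ : 0 < α₂) (hα₃ : 0 < α₃)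
    (x : ℝ → EuclideanSpace ℝ (Fin 3))
    (hx : ∀ t : ℝ, 0 ≤ t → HasDerivAt x (bVF α₁ α₂ α₃ d₁ d₂ d₃ (x t)) t)
    (hoct : ∀ i, 0 ≤ x 0 i) (h0 : x 0 ≠ 0) :
    ∀ p : EuclideanSpace ℝ (Fin 3),
      (∃ u : ℕ → ℝ, Filter.Tendsto u Filter.atTop Filter.atTop ∧
        Filter.Tendsto (fun n => x (u n)) Filter.atTop (nhds p)) →
      ((∀ i, 0 ≤ p i) ∧ (p 0) ^ 2 + (p 1) ^ 2 + (p 2) ^ 2 = 1) := by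
  rintro p ⟨u, hu, hxp⟩
  have hu₀ : ∀ᶠ n in atTop, 0 ≤ u n := hu.eventually_ge_atTop 0
  refine ⟨fun i => ge_of_tendsto (((EuclideanSpace.proj i).continuous.tendsto p).comp hxp)
    (hu₀.mono fun n hn => coord_nonneg_of_hasDerivAt_mul_coord (continuous_bVFRate i)
      (bVF_apply · i) hx (hoct i) hn), ?_⟩
  have hp : ‖p‖ ^ 2 = 1 :=
    tendsto_nhds_unique (hxp.norm.pow 2) ((tendsto_norm_sq_of_bVF hα₁ hα₂ hα₃ hx h0).comp hu)
  simpa [EuclideanSpace.real_norm_sq_eq, Fin.sum_univ_three] using hp
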